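/- arXiv:1312.6662 — 2 statements merged into one kernel-verified Lean document; each statement's English description precedes it below -/
import Mathlib

section
/- There exists a linear functional L on the space of real-valued functions on EVEN_n such that L(1) = 1, L(f²) ≥ 0 for every function f on EVEN_n that is (the restriction of) a polynomial of degree at most ⌈n/4⌉ − 1, and yet L((n−2) + x_n − ∑_{i=1}^{n−1} x_i) = −2 < 0, even though the function (n−2) + x_n − ∑_{i=1}^{n−1} x_i is nonnegative on EVEN_n. Consequently, (n−2)+x_n−∑_{i<n}x_i is not a sum of squares of polynomials of degree ≤ ⌈n/4⌉−1 on EVEN_n, i.e., the theta-rank of EVEN_n is at least ⌈n/4⌉. -/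
/-- The set `EVEN_n` of `±1` vectors with an even number of `-1`'s, as a type. -/
def EvenPt (n : ℕ) : Type :=
  {x : Fin n → ℝ // (∀ i, x i = 1 ∨ x i = -1) ∧ ∏ i, x i = 1}

/-- `f : EVEN_n → ℝ` is (the restriction of) a polynomial of total degree at most `k`. -/
def IsPolyDegLE (n k : ℕ) (f : EvenPt n → ℝ) : Prop :=
  ∃ p : MvPolynomial (Fin n) ℝ, p.totalDegree ≤ k ∧
    ∀ x : EvenPt n, f x = MvPolynomial.eval x.1 p

/-- The affine function `ℓ(x) = (n-2) + x_n - ∑_{i<n} x_i` on `EVEN_n`. -/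
def lfun (n : ℕ) (hn : 1 ≤ n) : EvenPt n → ℝ := fun x =>
  ((n : ℝ) - 2) + x.1 ⟨n - 1, by omega⟩ -
    ∑ i ∈ Finset.univ.filter (fun i : Fin n => (i : ℕ) < n - 1), x.1 i

/-!
For `|S| ≤ d` with `2d < n`, the characters `χ_S(x) = ∏_{i ∈ S} x_i` are orthogonal on `EVEN_n`:
`χ_S χ_T = χ_{S ∆ T}`, and `χ_U` sums to zero over `EVEN_n` unless `U = ∅` or `U = univ`, since
flipping one coordinate inside `U` and one outside is a bijection of `EVEN_n` negating `χ_U`.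
So pairing with the degree-`≤ d` truncation of the character expansion of the point mass at the
odd point `z = (1, …, 1, -1)` is a linear functional `L` that agrees with evaluation at `z` on
every polynomial of degree `≤ d`. Taking `d = max 1 (2 (⌈n/4⌉ - 1))`, `L` is nonnegative on
squares of polynomials of degree `≤ ⌈n/4⌉ - 1`, `L 1 = 1`, and `L ℓ = ℓ(z) = -2`.
-/

open Finset MvPolynomial

section SelfInverseProducts

variable {ι M : Type*} [CommMonoid M] {x : ι → M}

theorem Finset.prod_mul_prod_eq_prod_symmDiff [DecidableEq ι] (hx : ∀ i, x i * x i = 1)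
    (S T : Finset ι) : (∏ i ∈ S, x i) * ∏ i ∈ T, x i = ∏ i ∈ symmDiff S T, x i := by
  have hsq : (∏ i ∈ S ∩ T, x i) * ∏ i ∈ S ∩ T, x i = 1 := by
    rw [← prod_mul_distrib]
    exact prod_eq_one fun i _ => hx i
  rw [← prod_union_inter, symmDiff_eq_sup_sdiff_inf, sup_eq_union, inf_eq_inter,
    ← prod_sdiff inter_subset_union, mul_assoc, hsq, mul_one]

theorem Finset.prod_pow_eq_prod_filter_odd [Fintype ι] (hx : ∀ i, x i * x i = 1) (e : ι → ℕ) :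
    ∏ i, x i ^ e i = ∏ i with Odd (e i), x i := by
  rw [prod_filter]
  refine prod_congr rfl fun i _ => ?_
  rw [pow_eq_pow_mod (e i) (by rw [sq]; exact hx i)]
  split_ifs with h
  · rw [Nat.odd_iff.mp h, pow_one]
  · rw [Nat.not_odd_iff.mp h, pow_zero]

end SelfInverseProducts

namespace MvPolynomial

variable {σ R : Type*} [Fintype σ] [CommSemiring R]

theorem eval_eq_sum_coeff_mul_prod_odd {x : σ → R} (hx : ∀ i, x i * x i = 1)
    (p : MvPolynomial σ R) :
    eval x p = ∑ m ∈ p.support, coeff m p * ∏ i with Odd (m i), x i := by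
  simp only [eval_eq', prod_pow_eq_prod_filter_odd hx]

theorem card_filter_odd_le_totalDegree {p : MvPolynomial σ R} {m : σ →₀ ℕ}
    (hm : m ∈ p.support) : #{i | Odd (m i)} ≤ p.totalDegree :=
  calc #{i | Odd (m i)} = ∑ i with Odd (m i), 1 := card_eq_sum_ones _
    _ ≤ ∑ i with Odd (m i), m i := sum_le_sum fun _ hi => (mem_filter.mp hi).2.pos
    _ ≤ ∑ i, m i := sum_le_sum_of_subset (filter_subset _ _)
    _ ≤ p.totalDegree :=
      (Finsupp.sum_fintype m (fun _ e => e) fun _ => rfl).symm.trans_le (le_totalDegree hm)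

end MvPolynomial

namespace EvenPt

variable {n : ℕ}

theorem mul_self (x : EvenPt n) (i : Fin n) : x.1 i * x.1 i = 1 := by
  rcases x.2.1 i with h | h <;> rw [h] <;> norm_num

instance : Finite (EvenPt n) :=
  Finite.of_injective (fun x i => decide (x.1 i = 1)) fun x y hxy =>
    Subtype.ext <| funext fun i => by
      have := congrFun hxy i
      rcases x.2.1 i with hx | hx <;> rcases y.2.1 i with hy | hy <;> simp_all

noncomputable instance : Fintype (EvenPt n) := Fintype.ofFinite _

instance : Nonempty (EvenPt n) := ⟨⟨1, fun _ => Or.inl rfl, prod_const_one⟩⟩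

def mul (x y : EvenPt n) : EvenPt n :=
  ⟨x.1 * y.1, fun i => by
    rcases x.2.1 i with hx | hx <;> rcases y.2.1 i with hy | hy <;> simp [hx, hy], by
    rw [Pi.mul_def, prod_mul_distrib, x.2.2, y.2.2, one_mul]⟩

theorem mul_mul_self (x e : EvenPt n) : mul (mul x e) e = x :=
  Subtype.ext <| funext fun i => by
    change x.1 i * e.1 i * e.1 i = x.1 i
    rw [mul_assoc, mul_self, mul_one]

theorem sum_prod_eq_zero_of_prod_eq_neg_one {U : Finset (Fin n)} {e : EvenPt n}
    (he : ∏ i ∈ U, e.1 i = -1) : ∑ x : EvenPt n, ∏ i ∈ U, x.1 i = 0 := by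
  have hmul (x : EvenPt n) : ∏ i ∈ U, (mul x e).1 i = -∏ i ∈ U, x.1 i := by
    change ∏ i ∈ U, x.1 i * e.1 i = _
    rw [prod_mul_distrib, he, mul_neg_one]
  have h := Fintype.sum_bijective (mul · e) (Function.Involutive.bijective (mul_mul_self · e))
    (fun x => -∏ i ∈ U, x.1 i) (fun x => ∏ i ∈ U, x.1 i) fun x => (hmul x).symm
  rw [sum_neg_distrib] at h
  linarith

def flipPair (i j : Fin n) : EvenPt n :=
  ⟨Pi.mulSingle i (-1) * Pi.mulSingle j (-1), fun k => by
    simp only [Pi.mul_apply, Pi.mulSingle_apply]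
    split_ifs <;> simp_all, by
    rw [Pi.mul_def, prod_mul_distrib, Fintype.prod_pi_mulSingle', Fintype.prod_pi_mulSingle']
    norm_num⟩

theorem sum_prod_eq_zero {U : Finset (Fin n)} (hU : U.Nonempty) (hU' : U ≠ univ) :
    ∑ x : EvenPt n, ∏ i ∈ U, x.1 i = 0 := by
  obtain ⟨i, hi⟩ := hU
  obtain ⟨j, hj⟩ : ∃ j, j ∉ U := by simpa [eq_univ_iff_forall] using hU'
  refine sum_prod_eq_zero_of_prod_eq_neg_one (e := flipPair i j) ?_
  simp only [flipPair, Pi.mul_apply, prod_mul_distrib, prod_pi_mulSingle', hi, hj, if_true,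
    if_false, mul_one]

theorem sum_prod_mul_prod {S T : Finset (Fin n)} (hST : #S + #T < n) :
    ∑ x : EvenPt n, (∏ i ∈ S, x.1 i) * ∏ i ∈ T, x.1 i =
      if S = T then (Fintype.card (EvenPt n) : ℝ) else 0 := by
  simp only [prod_mul_prod_eq_prod_symmDiff (mul_self _)]
  split_ifs with h
  · simp [h]
  · refine sum_prod_eq_zero (nonempty_iff_ne_empty.mpr fun h' => h (symmDiff_eq_bot.mp h')) ?_
    intro h'
    have := (card_le_card (symmDiff_subset_union (s := S) (t := T))).trans (card_union_le S T)
    rw [h', card_univ, Fintype.card_fin] at this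
    omega

theorem exists_ne_eq_neg_one {x : EvenPt n} {a : Fin n} (ha : x.1 a = -1) :
    ∃ j ≠ a, x.1 j = -1 := by
  by_contra! h
  have : ∏ i, x.1 i = x.1 a := Fintype.prod_eq_single a fun j hj => (x.2.1 j).resolve_right (h j hj)
  rw [x.2.2, ha] at this
  norm_num at this

theorem sum_le (x : EvenPt n) (a : Fin n) : ∑ i, x.1 i ≤ n - 2 + 2 * x.1 a := by
  have hle (i : Fin n) : 0 ≤ 1 - x.1 i := by rcases x.2.1 i with h | h <;> rw [h] <;> norm_num
  have hsum : ∑ i, (1 - x.1 i) = n - ∑ i, x.1 i := by simp [sum_sub_distrib]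
  rcases x.2.1 a with ha | ha
  · linarith [sum_nonneg fun i (_ : i ∈ univ) => hle i]
  · obtain ⟨j, hja, hj⟩ := exists_ne_eq_neg_one ha
    have := add_le_sum (fun i _ => hle i) (mem_univ a) (mem_univ j) hja.symm
    rw [ha, hj] at this
    linarith

end EvenPt

section PseudoEval

variable {n : ℕ} (d : ℕ) (z : Fin n → ℝ)

/-- Pairing with the degree-`≤ d` truncation of the character expansion of the point mass at `z`,
normalised over `EVEN_n`. -/
noncomputable def pseudoEval : (EvenPt n → ℝ) →ₗ[ℝ] ℝ :=
  Fintype.linearCombination ℝ fun x : EvenPt n =>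
    (Fintype.card (EvenPt n) : ℝ)⁻¹ * ∑ S : Finset (Fin n) with #S ≤ d,
      (∏ i ∈ S, z i) * ∏ i ∈ S, x.1 i

variable {d}

theorem pseudoEval_prod (hd : 2 * d < n) {T : Finset (Fin n)} (hT : #T ≤ d) :
    pseudoEval d z (fun x => ∏ i ∈ T, x.1 i) = ∏ i ∈ T, z i := by
  have hN : (Fintype.card (EvenPt n) : ℝ) ≠ 0 := by positivity
  calc pseudoEval d z (fun x => ∏ i ∈ T, x.1 i)
      = (Fintype.card (EvenPt n) : ℝ)⁻¹ * ∑ S : Finset (Fin n) with #S ≤ d, (∏ i ∈ S, z i) *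
          ∑ x : EvenPt n, (∏ i ∈ S, x.1 i) * ∏ i ∈ T, x.1 i := by
        simp only [pseudoEval, Fintype.linearCombination_apply, smul_eq_mul, mul_sum]
        rw [sum_comm]
        refine sum_congr rfl fun S _ => sum_congr rfl fun x _ => by ring
    _ = ∏ i ∈ T, z i := by
        rw [sum_congr rfl fun S hS => by
          rw [EvenPt.sum_prod_mul_prod (by have := (mem_filter.mp hS).2; omega)]]
        simp only [mul_ite, mul_zero, sum_ite_eq', mem_filter, mem_univ, true_and, if_pos hT]
        field_simp

theorem pseudoEval_eval (hd : 2 * d < n) (hz : ∀ i, z i * z i = 1) {p : MvPolynomial (Fin n) ℝ}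
    (hp : p.totalDegree ≤ d) : pseudoEval d z (fun x => eval x.1 p) = eval z p := by
  have hp' : (fun x : EvenPt n => eval x.1 p) =
      ∑ m ∈ p.support, coeff m p • fun x : EvenPt n => ∏ i with Odd (m i), x.1 i := by
    ext x
    simp [eval_eq_sum_coeff_mul_prod_odd (EvenPt.mul_self x)]
  rw [hp', map_sum, eval_eq_sum_coeff_mul_prod_odd hz]
  refine sum_congr rfl fun m hm => ?_
  rw [map_smul, pseudoEval_prod z hd ((card_filter_odd_le_totalDegree hm).trans hp), smul_eq_mul]

end PseudoEval

theorem not_exists_sum_sq_of_map_neg {α : Type*} {P : (α → ℝ) → Prop}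
    (L : (α → ℝ) →ₗ[ℝ] ℝ) (hL : ∀ f, P f → 0 ≤ L fun x => f x ^ 2) {g : α → ℝ} (hg : L g < 0) :
    ¬ ∃ (J : ℕ) (f : Fin J → α → ℝ), (∀ j, P (f j)) ∧ ∀ x, g x = ∑ j, f j x ^ 2 := by
  rintro ⟨J, f, hf, hg'⟩
  have : g = ∑ j, fun x => f j x ^ 2 := funext fun x => by simp [hg']
  rw [this, map_sum] at hg
  exact hg.not_ge (sum_nonneg fun j _ => hL _ (hf j))

theorem lfun_eq {n : ℕ} (hn : 1 ≤ n) (x : EvenPt n) :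
    lfun n hn x = n - 2 + 2 * x.1 ⟨n - 1, by omega⟩ - ∑ i, x.1 i := by
  have herase : univ.filter (fun i : Fin n => (i : ℕ) < n - 1) = univ.erase ⟨n - 1, by omega⟩ := by
    ext i
    simp only [mem_filter, mem_univ, true_and, mem_erase, ne_eq, Fin.ext_iff, and_true]
    omega
  rw [lfun, herase, ← add_sum_erase _ _ (mem_univ _)]
  ring

theorem lfun_nonneg {n : ℕ} (hn : 1 ≤ n) (x : EvenPt n) : 0 ≤ lfun n hn x := by
  rw [lfun_eq]
  linarith [x.sum_le ⟨n - 1, by omega⟩]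

noncomputable def lfunPoly (n : ℕ) (a : Fin n) : MvPolynomial (Fin n) ℝ :=
  C ((n : ℝ) - 2) + (2 : ℝ) • X a - ∑ i, X i

theorem lfun_eq_eval {n : ℕ} (hn : 1 ≤ n) (x : EvenPt n) :
    lfun n hn x = eval x.1 (lfunPoly n ⟨n - 1, by omega⟩) := by
  simp [lfun_eq, lfunPoly]

theorem totalDegree_lfunPoly_le {n : ℕ} (a : Fin n) : (lfunPoly n a).totalDegree ≤ 1 := by
  rw [← mem_restrictTotalDegree]
  have hX (i : Fin n) : X i ∈ restrictTotalDegree (Fin n) ℝ 1 := by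
    rw [mem_restrictTotalDegree, totalDegree_X]
  refine sub_mem (add_mem ?_ (Submodule.smul_mem _ _ (hX a))) (sum_mem fun i _ => hX i)
  rw [mem_restrictTotalDegree, totalDegree_C]
  exact zero_le_one

theorem eval_mulSingle_lfunPoly {n : ℕ} (a : Fin n) :
    eval (Pi.mulSingle a (-1)) (lfunPoly n a) = -2 := by
  have hsum : ∑ i, Pi.mulSingle a (-1 : ℝ) i = n - 2 := by
    rw [← add_sum_erase _ _ (mem_univ a), Pi.mulSingle_eq_same,
      sum_congr rfl fun i hi => Pi.mulSingle_eq_of_ne (ne_of_mem_erase hi) _]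
    simp only [sum_const, card_erase_of_mem (mem_univ a), card_univ, Fintype.card_fin,
      nsmul_eq_mul, mul_one, Nat.cast_pred a.pos]
    ring
  simp only [lfunPoly, map_sub, map_add, map_sum, eval_C, eval_X, smul_eval, Pi.mulSingle_eq_same,
    hsum]
  ring

/-- The function `ℓ(x) = (n-2) + x_n - ∑_{i<n} x_i` is nonnegative on `EVEN_n`, yet
there is a linear functional `L` on functions on `EVEN_n` with `L(1) = 1`,
`L(f²) ≥ 0` for every polynomial `f` of degree `≤ ⌈n/4⌉ - 1`, and `L(ℓ) = -2 < 0`.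
Consequently `ℓ` is not a sum of squares of polynomials of degree `≤ ⌈n/4⌉ - 1`
on `EVEN_n`, i.e. the theta-rank of `EVEN_n` is at least `⌈n/4⌉`. -/
theorem parity_theta_rank_lower_bound (n : ℕ) (hn : 3 ≤ n) :
    (∀ x : EvenPt n, 0 ≤ lfun n (by omega) x) ∧
    (∃ L : (EvenPt n → ℝ) →ₗ[ℝ] ℝ,
      L (fun _ => 1) = 1 ∧
      (∀ f : EvenPt n → ℝ, IsPolyDegLE n ((n + 3) / 4 - 1) f →
        0 ≤ L (fun x => f x ^ 2)) ∧
      L (lfun n (by omega)) = -2) ∧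
    ¬ ∃ (J : ℕ) (f : Fin J → EvenPt n → ℝ),
        (∀ j, IsPolyDegLE n ((n + 3) / 4 - 1) (f j)) ∧
        ∀ x : EvenPt n, lfun n (by omega) x = ∑ j, f j x ^ 2 := by
  set k := (n + 3) / 4 - 1
  set d := max 1 (2 * k)
  have hd : 2 * d < n := by omega
  set a : Fin n := ⟨n - 1, by omega⟩
  set z : Fin n → ℝ := Pi.mulSingle a (-1)
  have hz (i : Fin n) : z i * z i = 1 := by
    simp only [z, Pi.mulSingle_apply]
    split_ifs <;> norm_num
  set L := pseudoEval d z
  have hL {p} (hp : p.totalDegree ≤ d) := pseudoEval_eval _ hd hz (p := p) hp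
  have hsq (f : EvenPt n → ℝ) (hf : IsPolyDegLE n k f) : 0 ≤ L fun x => f x ^ 2 := by
    obtain ⟨p, hp, hfp⟩ := hf
    have hp2 : (p ^ 2).totalDegree ≤ d := (totalDegree_pow p 2).trans (by omega)
    have hf2 : (fun x => f x ^ 2) = fun x : EvenPt n => eval x.1 (p ^ 2) :=
      funext fun x => by rw [hfp, map_pow]
    rw [hf2, hL hp2, map_pow]
    positivity
  have hℓ : L (lfun n (by omega)) = -2 := by
    rw [funext (lfun_eq_eval _), hL ((totalDegree_lfunPoly_le a).trans (le_max_left _ _)),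
      eval_mulSingle_lfunPoly]
  refine ⟨lfun_nonneg _, ⟨L, ?_, hsq, hℓ⟩,
    not_exists_sum_sq_of_map_neg L hsq (by rw [hℓ]; norm_num)⟩
  simpa using hL (p := C 1) (by rw [totalDegree_C]; omega)
end

section
/- Let k < n/2 and let V be a nonzero subspace of Pol_k(C_n) (spanned by square-free monomials of degree k on the hypercube C_n = {-1,1}ⁿ) that is invariant under sign switches and coordinate permutations. Then applying the averaging operator ∏_{i=k+1}^n (id + ε_i) to any p ∈ V with nonzero coefficient on x₁⋯x_k yields 2^{n−k}·x₁x₂⋯x_k, where ε_i is the sign switch of the i-th coordinate; consequently V = Pol_k(C_n). -/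
/-!
The operator `id + ε_j` kills every monomial `x^I` with `j ∈ I` and doubles the others, so
`∏_{j ∉ A} (id + ε_j)` annihilates every degree-`k` monomial except `x^A` (any other `k`-set
meets the complement of `A`) and sends `∑ c_I x^I` to `2^{n-k} c_A x^A`. Since `V` is stable
under sign switches, this projects a nonzero `p ∈ V` onto a single monomial `x^J` with
`c_J ≠ 0`, so `x^J ∈ V`; coordinate permutations then carry `x^J` to every `x^I` with `|I| = k`.
-/

/-- The hypercube `C_n = {-1,1}ⁿ`, as a type. -/
def Cube (n : ℕ) : Type := {x : Fin n → ℝ // ∀ i, x i = 1 ∨ x i = -1}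

/-- Switching the sign of the `j`-th coordinate of a hypercube point. -/
def flipAt (n : ℕ) (j : Fin n) (x : Cube n) : Cube n :=
  ⟨fun i => if i = j then -x.1 i else x.1 i, by
    intro i
    by_cases hij : i = j
    · subst hij; rcases x.2 i with h | h <;> simp [h]
    · rcases x.2 i with h | h <;> simp [hij, h]⟩

/-- Permuting the coordinates of a hypercube point. -/
def permAt (n : ℕ) (σ : Equiv.Perm (Fin n)) (x : Cube n) : Cube n :=
  ⟨fun i => x.1 (σ i), fun i => x.2 (σ i)⟩

/-- The operator `id + ε_j` acting on functions on the hypercube, where `ε_j` is the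
sign switch of the `j`-th coordinate. -/
def opE (n : ℕ) (j : Fin n) (f : Cube n → ℝ) : Cube n → ℝ :=
  fun x => f x + f (flipAt n j x)

/-- The composite operator `∏_{j ∈ s} (id + ε_j)` (the operators commute). -/
def opProd (n : ℕ) (s : List (Fin n)) (f : Cube n → ℝ) : Cube n → ℝ :=
  s.foldr (opE n) f

open Finset

lemma List.length_filter_finRange {n : ℕ} (p : Fin n → Bool) :
    ((List.finRange n).filter p).length = #{i | p i} := by
  rw [← List.toFinset_card_of_nodup ((List.nodup_finRange n).filter _)]
  congr 1; ext; simp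

lemma List.length_filter_finRange_le (n k : ℕ) :
    ((List.finRange n).filter fun i : Fin n => k ≤ (i : ℕ)).length = n - k := by
  have := card_filter_add_card_filter_not (s := (univ : Finset (Fin n))) fun i => (i : ℕ) < k
  simp only [not_lt, Fin.card_filter_val_lt, card_univ, Fintype.card_fin] at this
  rw [List.length_filter_finRange]
  simp only [decide_eq_true_eq]
  omega

namespace Cube

variable {n : ℕ}

def monomial (n : ℕ) (I : Finset (Fin n)) : Cube n → ℝ := fun x => ∏ i ∈ I, x.1 i

def polK (n k : ℕ) : Submodule ℝ (Cube n → ℝ) :=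
  Submodule.span ℝ {f | ∃ I : Finset (Fin n), I.card = k ∧ f = monomial n I}

lemma mem_polK_iff {k : ℕ} {p : Cube n → ℝ} :
    p ∈ polK n k ↔ ∃ c : Finset (Fin n) → ℝ, ∑ I ∈ {I | #I = k}, c I • monomial n I = p := by
  have : {f | ∃ I : Finset (Fin n), #I = k ∧ f = monomial n I}
      = monomial n '' ↑({I | #I = k} : Finset (Finset (Fin n))) := by
    ext; simp [eq_comm]
  rw [polK, this, Submodule.mem_span_image_finset_iff_exists_fun']

lemma monomial_flipAt (j : Fin n) (I : Finset (Fin n)) (x : Cube n) :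
    monomial n I (flipAt n j x) = (if j ∈ I then -1 else 1) * monomial n I x := by
  rw [monomial, monomial, ← prod_ite_eq' I j fun _ => (-1 : ℝ), ← prod_mul_distrib]
  refine prod_congr rfl fun i _ => ?_
  simp only [flipAt]
  split_ifs <;> ring

lemma monomial_permAt (σ : Equiv.Perm (Fin n)) (I : Finset (Fin n)) :
    (fun x => monomial n I (permAt n σ x)) = monomial n (I.map σ.toEmbedding) := by
  funext x
  simp [monomial, permAt, prod_map]

lemma monomial_mem_of_card_eq {V : Submodule ℝ (Cube n → ℝ)}
    (hV : ∀ σ : Equiv.Perm (Fin n), ∀ f ∈ V, (fun x => f (permAt n σ x)) ∈ V)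
    {I J : Finset (Fin n)} (hI : monomial n I ∈ V) (hIJ : #I = #J) : monomial n J ∈ V := by
  obtain ⟨σ, rfl⟩ := Equiv.Perm.exists_map_finset_eq I J hIJ
  exact monomial_permAt σ I ▸ hV σ _ hI

def opEₗ (n : ℕ) (j : Fin n) : Module.End ℝ (Cube n → ℝ) :=
  LinearMap.id + LinearMap.funLeft ℝ ℝ (flipAt n j)

lemma coe_opEₗ (j : Fin n) : ⇑(opEₗ n j) = opE n j := rfl

def opProdₗ (n : ℕ) (s : List (Fin n)) : Module.End ℝ (Cube n → ℝ) :=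
  (s.map (opEₗ n)).prod

lemma coe_opProdₗ (s : List (Fin n)) : ⇑(opProdₗ n s) = opProd n s := by
  induction s with
  | nil => rfl
  | cons j s ih => funext f; exact congrArg (opE n j) (congrFun ih f)

lemma opE_monomial (j : Fin n) (I : Finset (Fin n)) :
    opE n j (monomial n I) = (if j ∈ I then 0 else 2 : ℝ) • monomial n I := by
  funext x
  simp only [opE, monomial_flipAt, Pi.smul_apply, smul_eq_mul]
  split_ifs <;> ring

lemma opProd_monomial (s : List (Fin n)) (I : Finset (Fin n)) :
    opProd n s (monomial n I)
      = (if ∀ j ∈ s, j ∉ I then 2 ^ s.length else 0 : ℝ) • monomial n I := by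
  induction s with
  | nil => simp [opProd]
  | cons j s ih =>
    change opE n j (opProd n s (monomial n I)) = _
    rw [ih, ← coe_opEₗ, map_smul, coe_opEₗ, opE_monomial, smul_smul]
    by_cases hj : j ∈ I <;> simp [hj, pow_succ, mul_comm]

lemma opProd_mem {V : Submodule ℝ (Cube n → ℝ)}
    (hV : ∀ j, ∀ f ∈ V, (fun x => f (flipAt n j x)) ∈ V) (s : List (Fin n))
    {f : Cube n → ℝ} (hf : f ∈ V) : opProd n s f ∈ V := by
  induction s with
  | nil => exact hf
  | cons j s ih => exact V.add_mem ih (hV j _ ih)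

lemma opProd_sum_smul_monomial (s : List (Fin n)) (A : Finset (Fin n))
    (hs : ∀ j, j ∈ s ↔ j ∉ A) {T : Finset (Finset (Fin n))} (hA : A ∈ T)
    (hT : ∀ I ∈ T, #I = #A) (c : Finset (Fin n) → ℝ) :
    opProd n s (∑ I ∈ T, c I • monomial n I) = (c A * 2 ^ s.length) • monomial n A := by
  rw [← coe_opProdₗ, map_sum, sum_eq_single A]
  · rw [map_smul, coe_opProdₗ, opProd_monomial, if_pos fun j hj => (hs j).1 hj, smul_smul]
  · intro I hI hIA
    rw [map_smul, coe_opProdₗ, opProd_monomial, if_neg, zero_smul, smul_zero]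
    intro hIs
    refine hIA (eq_of_subset_of_card_le (fun i hi => ?_) (hT I hI).ge)
    by_contra hiA
    exact hIs i ((hs i).2 hiA) hi
  · exact fun h => absurd hA h

end Cube

/-- Let `k < n/2` and let `V` be a nonzero subspace of `Pol_k(C_n)` invariant under
sign switches and coordinate permutations. Then applying `∏_{i=k+1}^{n}(id + ε_i)` to
any `p = ∑_{|I|=k} c_I x^I` with `c_{{1,…,k}} ≠ 0` yields
`c_{{1,…,k}} · 2^{n-k} · x₁⋯x_k`; consequently `V = Pol_k(C_n)`. -/
theorem cube_polK_irreducible (n k : ℕ) (hk : 2 * k < n)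
    (V : Submodule ℝ (Cube n → ℝ)) (hV0 : V ≠ ⊥)
    (hVle : V ≤ Submodule.span ℝ
      {f | ∃ I : Finset (Fin n), I.card = k ∧ f = fun x : Cube n => ∏ i ∈ I, x.1 i})
    (hflip : ∀ (j : Fin n), ∀ f ∈ V, (fun x => f (flipAt n j x)) ∈ V)
    (hperm : ∀ (σ : Equiv.Perm (Fin n)), ∀ f ∈ V, (fun x => f (permAt n σ x)) ∈ V) :
    (∀ (c : Finset (Fin n) → ℝ) (p : Cube n → ℝ),
      (p = fun x : Cube n =>
        ∑ I ∈ Finset.univ.filter (fun I : Finset (Fin n) => I.card = k),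
          c I * ∏ i ∈ I, x.1 i) →
      c (Finset.univ.filter fun i : Fin n => (i : ℕ) < k) ≠ 0 →
      opProd n ((List.finRange n).filter fun i => k ≤ (i : ℕ)) p =
        fun x : Cube n =>
          c (Finset.univ.filter fun i : Fin n => (i : ℕ) < k) * 2 ^ (n - k) *
            ∏ i ∈ Finset.univ.filter (fun i : Fin n => (i : ℕ) < k), x.1 i) ∧
    V = Submodule.span ℝ
      {f | ∃ I : Finset (Fin n), I.card = k ∧ f = fun x : Cube n => ∏ i ∈ I, x.1 i} := by
  have hcard : #{i : Fin n | (i : ℕ) < k} = k := by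
    rw [Fin.card_filter_val_lt]; omega
  refine ⟨?_, ?_⟩
  · rintro c p rfl -
    have hsum : (fun x : Cube n => ∑ I ∈ {I | #I = k}, c I * ∏ i ∈ I, x.1 i)
        = ∑ I ∈ {I | #I = k}, c I • Cube.monomial n I := by
      ext x; simp [Cube.monomial]
    rw [hsum, Cube.opProd_sum_smul_monomial _ {i | (i : ℕ) < k} (by simp) (by simp [hcard])
      (by simp [hcard]), List.length_filter_finRange_le]
    rfl
  · change V = Cube.polK n k
    obtain ⟨p, hpV, hp0⟩ := (Submodule.ne_bot_iff V).mp hV0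
    obtain ⟨c, rfl⟩ := Cube.mem_polK_iff.mp (hVle hpV)
    obtain ⟨J, hJ, hcJ⟩ : ∃ J ∈ ({I | #I = k} : Finset _), c J ≠ 0 := by
      by_contra! h
      exact hp0 (sum_eq_zero fun I hI => by rw [h I hI, zero_smul])
    have hJV : Cube.monomial n J ∈ V := by
      have := Cube.opProd_mem hflip ((List.finRange n).filter (· ∉ J)) hpV
      rw [Cube.opProd_sum_smul_monomial _ J (by simp) hJ (by simp_all)] at this
      exact (V.smul_mem_iff (by positivity)).mp this
    refine le_antisymm hVle (Submodule.span_le.mpr ?_)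
    rintro f ⟨I, hI, rfl⟩
    exact Cube.monomial_mem_of_card_eq hperm hJV (by simp_all)
end
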